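/- In Model S with a > 0, there exists a constant C₁ such that for all n, |E X_n(u) − n·m/(a·u + b + 1)| ≤ C₁, where u is the minimal score of a new individual. -/

import Mathlib

open MeasureTheory ProbabilityTheory Filter

/-- **Model S**: a general population evolution model.  The population lives on a
probability space `(Ω, μ)` with filtration `F`.  `pop n ω` is the number of individuals
alive at time `n` (individuals are labelled `0, 1, 2, …` in order of birth, so individual
`i` is alive at time `n` iff `i < pop n ω`).  `S n i ω` is the score of individual `i`
at time `n`.  At most `t` individuals are born at each step, every individual has score
at least `u`, a newborn has score exceeding `u` with probability `O(1/n)`, the score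
evolution satisfies the Model S transition probabilities with parameters `a, b`, the
total score increase in one step is at most `t`, and the expected number `ξ_n` of
newborns satisfies `E ξ_n = m + O(1/n)`. -/
structure ModelS (Ω : Type) [MeasurableSpace Ω] where
  μ : Measure Ω
  isProb : IsProbabilityMeasure μ
  F : ℕ → MeasurableSpace Ω
  F_mono : Monotone F
  F_le : ∀ n, F n ≤ (inferInstance : MeasurableSpace Ω)
  t : ℕ
  t_pos : 0 < t
  u : ℕ
  u_pos : 0 < u
  a : ℝ
  b : ℝ
  m : ℝ
  c₀ : ℝ
  a_nonneg : 0 ≤ a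
  b_nonneg : 0 ≤ b
  m_pos : 0 < m
  c₀_pos : 0 < c₀
  pop : ℕ → Ω → ℕ
  pop_mono : ∀ ω, Monotone fun n => pop n ω
  pop_adapted : ∀ n, Measurable[F n] (pop n)
  pop_zero_le : ∀ ω, pop 0 ω ≤ t
  births_le : ∀ n ω, pop (n + 1) ω - pop n ω ≤ t
  S : ℕ → ℕ → Ω → ℕ
  S_adapted : ∀ n i, Measurable[F n] (S n i)
  S_mono : ∀ n i ω, S n i ω ≤ S (n + 1) i ω
  score_ge_u : ∀ n i ω, i < pop n ω → u ≤ S n i ω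
  new_score_u : ∀ n : ℕ, 1 ≤ n →
      μ {ω | ∃ i, pop (n - 1) ω ≤ i ∧ i < pop n ω ∧ u < S n i ω} ≤ ENNReal.ofReal (c₀ / n)
  total_incr_le : ∀ n ω, ∑ i ∈ Finset.range (pop n ω), (S (n + 1) i ω - S n i ω) ≤ t
  score_up_one : ∀ n : ℕ, 1 ≤ n → ∀ i : ℕ, ∀ᵐ ω ∂μ, i < pop n ω →
      |(μ[Set.indicator {ω' | S (n + 1) i ω' = S n i ω' + 1} (fun _ => (1 : ℝ)) | F n]) ω
          - a * (S n i ω : ℝ) / n - b / n| ≤ c₀ * ((S n i ω : ℝ) / n) ^ 2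
  score_up_big : ∀ n : ℕ, 1 ≤ n → ∀ i : ℕ, ∀ᵐ ω ∂μ, i < pop n ω →
      (μ[Set.indicator {ω' | S n i ω' + 1 < S (n + 1) i ω'} (fun _ => (1 : ℝ)) | F n]) ω
          ≤ c₀ * ((S n i ω : ℝ) / n) ^ 2
  xi_mean : ∀ n : ℕ, 1 ≤ n →
      |(∫ ω, ((pop n ω : ℝ) - (pop (n - 1) ω : ℝ)) ∂μ) - m| ≤ c₀ / n

namespace ModelS

variable {Ω : Type} [MeasurableSpace Ω]

/-- `X n s`: the number of individuals having score `s` at time `n`. -/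
def X (M : ModelS Ω) (n s : ℕ) (ω : Ω) : ℕ :=
  ((Finset.range (M.pop n ω)).filter fun i => M.S n i ω = s).card

/-- `EX n s = 𝔼 X_n(s)`. -/
noncomputable def EX (M : ModelS Ω) (n s : ℕ) : ℝ := ∫ ω, (M.X n s ω : ℝ) ∂M.μ

/-- the limiting score distribution `c(u,s)`. -/
noncomputable def c (M : ModelS Ω) (s : ℕ) : ℝ :=
  M.m * Real.Gamma ((s : ℝ) + M.b / M.a) * Real.Gamma ((M.u : ℝ) + (M.b + 1) / M.a) /
    (M.a * Real.Gamma ((s : ℝ) + (M.b + M.a + 1) / M.a) * Real.Gamma ((M.u : ℝ) + M.b / M.a))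

end ModelS

/-!
Write `x n = E X_n(u)` and `q = a u + b`. An individual has score `u` at time `n + 1` exactly
when it had score `u` at time `n` and its score did not move, or it was born at time `n + 1`
with score `u`. Conditioning on `F n`, the first event loses a fraction `q / n` of its mass up to
`O(x n / n²)`; births contribute `m + O(1/n)` and newborns above `u` only `O(1/n)`. As
`x n = O(n)`, this gives `x (n + 1) = (1 - q / n) x n + m + O(1/n)`. For `n ≥ q` the factor
`1 - q / n` lies in `[0, 1]`, so the error `e n = x n - n m / (q + 1)` satisfies
`|e (n + 1)| ≤ (1 - q / n) |e n| + K / n`, and `|e n| ≤ C` propagates once `K ≤ q C`.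
-/

section CondExp

variable {Ω : Type*} {m m₀ : MeasurableSpace Ω} {μ : Measure[m₀] Ω} [IsFiniteMeasure μ]
  {A B : Set Ω} {c ε : ℝ}

theorem abs_measureReal_inter_sub_le_of_condExp (hm : m ≤ m₀) (hA : MeasurableSet[m] A)
    (hB : MeasurableSet B) (h : ∀ᵐ ω ∂μ, ω ∈ A → |μ[B.indicator 1 | m] ω - c| ≤ ε) :
    |μ.real (B ∩ A) - c * μ.real A| ≤ ε * μ.real A := by
  have key : ∫ ω in A, (μ[B.indicator 1 | m] ω - c) ∂μ = μ.real (B ∩ A) - c * μ.real A := by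
    rw [integral_sub integrable_condExp.integrableOn (integrable_const _),
      setIntegral_condExp hm ((integrable_const 1).indicator hB) hA, integral_indicator_one hB,
      measureReal_restrict_apply hB, setIntegral_const, smul_eq_mul, mul_comm]
  simp only [← Real.norm_eq_abs] at h ⊢
  rw [← key]
  exact norm_setIntegral_le_of_norm_le_const_ae' (measure_lt_top _ _) h

theorem measureReal_inter_le_of_condExp_le (hm : m ≤ m₀) (hA : MeasurableSet[m] A)
    (hB : MeasurableSet B) (h : ∀ᵐ ω ∂μ, ω ∈ A → μ[B.indicator 1 | m] ω ≤ ε) :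
    μ.real (B ∩ A) ≤ ε * μ.real A :=
  calc μ.real (B ∩ A) = ∫ ω in A, μ[B.indicator 1 | m] ω ∂μ := by
        rw [setIntegral_condExp hm ((integrable_const 1).indicator hB) hA,
          integral_indicator_one hB, measureReal_restrict_apply hB]
    _ ≤ ∫ _ in A, ε ∂μ :=
        setIntegral_mono_on_ae integrable_condExp.integrableOn
          (integrable_const _) (hm A hA) h
    _ = ε * μ.real A := by rw [setIntegral_const, smul_eq_mul, mul_comm]

end CondExp

section Recursion

theorem abs_le_of_abs_succ_le {e : ℕ → ℝ} {q K C : ℝ} {n₀ : ℕ} (hq : 0 < q) (hqn₀ : q ≤ n₀)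
    (hK : K ≤ q * C) (he : ∀ n ≥ n₀, |e (n + 1)| ≤ |1 - q / n| * |e n| + K / n)
    (h₀ : |e n₀| ≤ C) : ∀ n ≥ n₀, |e n| ≤ C := by
  intro n hn
  induction n, hn using Nat.le_induction with
  | base => exact h₀
  | succ n hn ih =>
    have hqn : q ≤ n := hqn₀.trans (by exact_mod_cast hn)
    have hpos : (0 : ℝ) < n := hq.trans_le hqn
    have hfac : 0 ≤ 1 - q / n := sub_nonneg.2 (div_le_one_of_le₀ hqn hpos.le)
    calc |e (n + 1)| ≤ (1 - q / n) * |e n| + K / n := by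
          simpa only [abs_of_nonneg hfac] using he n hn
      _ ≤ (1 - q / n) * C + q * C / n := by gcongr
      _ = C := by field_simp; ring

theorem exists_abs_sub_le_of_abs_succ_sub_le {x : ℕ → ℝ} {q m K : ℝ} (hq : 0 < q)
    (hx : ∀ n ≥ 1, |x (n + 1) - (1 - q / n) * x n - m| ≤ K / n) :
    ∃ C, ∀ n : ℕ, |x n - n * m / (q + 1)| ≤ C := by
  set e : ℕ → ℝ := fun n => x n - n * m / (q + 1)
  have he : ∀ n ≥ 1, |e (n + 1)| ≤ |1 - q / n| * |e n| + K / n := by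
    intro n hn
    have hn' : (n : ℝ) ≠ 0 := by positivity
    have hq' : q + 1 ≠ 0 := by positivity
    have hstep : e (n + 1) = (1 - q / n) * e n + (x (n + 1) - (1 - q / n) * x n - m) := by
      simp only [e]
      push_cast
      field_simp
      ring
    rw [hstep, ← abs_mul]
    exact (abs_add_le _ _).trans (add_le_add_right (hx n hn) _)
  set n₀ := ⌈q⌉₊ + 1
  have hqn₀ : q ≤ n₀ := (Nat.le_ceil q).trans (by exact_mod_cast (⌈q⌉₊).le_succ)
  set C := max (∑ k ∈ Finset.range (n₀ + 1), |e k|) (K / q)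
  have hsmall : ∀ n ≤ n₀, |e n| ≤ C := fun n hn =>
    (Finset.single_le_sum (fun k _ => abs_nonneg (e k)) (Finset.mem_range.2 (by omega))).trans
      (le_max_left _ _)
  have hK : K ≤ q * C := by
    rw [← div_le_iff₀' hq]
    exact le_max_right _ _
  refine ⟨C, fun n => ?_⟩
  rcases le_total n n₀ with h | h
  · exact hsmall n h
  · exact abs_le_of_abs_succ_le hq hqn₀ hK (fun n hn => he n (by omega)) (hsmall n₀ le_rfl) n h

end Recursion

namespace ModelS

variable {Ω : Type} [MeasurableSpace Ω] (M : ModelS Ω)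

def hasScore (n s i : ℕ) : Set Ω := {ω | i < M.pop n ω ∧ M.S n i ω = s}

def stepOne (n i : ℕ) : Set Ω := {ω | M.S (n + 1) i ω = M.S n i ω + 1}

def stepBig (n i : ℕ) : Set Ω := {ω | M.S n i ω + 1 < M.S (n + 1) i ω}

def born (n i : ℕ) : Set Ω := {ω | M.pop (n - 1) ω ≤ i ∧ i < M.pop n ω}

def bornAbove (n i : ℕ) : Set Ω :=
  {ω | M.pop (n - 1) ω ≤ i ∧ i < M.pop n ω ∧ M.u < M.S n i ω}

section Measurability

variable (n i : ℕ)

theorem measurable_pop : Measurable (M.pop n) := (M.pop_adapted n).mono (M.F_le n) le_rfl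

theorem measurable_S : Measurable (M.S n i) := (M.S_adapted n i).mono (M.F_le n) le_rfl

theorem measurableSet_hasScore_F (s : ℕ) : MeasurableSet[M.F n] (M.hasScore n s i) := by
  have := M.pop_adapted n
  have := M.S_adapted n i
  unfold hasScore
  measurability

theorem measurableSet_hasScore (s : ℕ) : MeasurableSet (M.hasScore n s i) :=
  M.F_le n _ (M.measurableSet_hasScore_F n i s)

theorem measurableSet_stepOne : MeasurableSet (M.stepOne n i) := by
  have := M.measurable_S n i
  have := M.measurable_S (n + 1) i
  unfold stepOne
  measurability

theorem measurableSet_stepBig : MeasurableSet (M.stepBig n i) := by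
  have := M.measurable_S n i
  have := M.measurable_S (n + 1) i
  unfold stepBig
  measurability

theorem measurableSet_born : MeasurableSet (M.born n i) := by
  have := M.measurable_pop (n - 1)
  have := M.measurable_pop n
  unfold born
  measurability

theorem measurableSet_bornAbove : MeasurableSet (M.bornAbove n i) := by
  have := M.measurable_pop (n - 1)
  have := M.measurable_pop n
  have := M.measurable_S n i
  unfold bornAbove
  measurability

end Measurability

theorem pop_le (n : ℕ) (ω : Ω) : M.pop n ω ≤ M.t * (n + 1) := by
  induction n with
  | zero => simpa using M.pop_zero_le ω
  | succ n ih =>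
    have := M.births_le n ω
    rw [mul_add_one]
    omega

theorem pop_pred_le (n : ℕ) (ω : Ω) : M.pop (n - 1) ω ≤ M.pop n ω :=
  M.pop_mono ω (Nat.sub_le n 1)

theorem X_eq_sum_indicator {n N : ℕ} (hN : M.t * (n + 1) ≤ N) (s : ℕ) (ω : Ω) :
    (M.X n s ω : ℝ) = ∑ i ∈ Finset.range N, (M.hasScore n s i).indicator 1 ω := by
  have hpop := M.pop_le n ω
  simp only [Set.indicator_apply, Pi.one_apply, Finset.sum_boole, X, hasScore, Set.mem_ofPred_eq]
  congr 2
  ext i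
  simp only [Finset.mem_filter, Finset.mem_range]
  omega

instance : IsProbabilityMeasure M.μ := M.isProb

theorem EX_eq_sum_measureReal {n N : ℕ} (hN : M.t * (n + 1) ≤ N) (s : ℕ) :
    M.EX n s = ∑ i ∈ Finset.range N, M.μ.real (M.hasScore n s i) := by
  simp only [EX, M.X_eq_sum_indicator hN]
  rw [integral_finsetSum _ fun i _ =>
    (integrable_const 1).indicator (M.measurableSet_hasScore n i s)]
  simp only [integral_indicator_one (M.measurableSet_hasScore n _ s)]

theorem EX_le (n s : ℕ) : M.EX n s ≤ M.t * (n + 1) := by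
  rw [M.EX_eq_sum_measureReal le_rfl]
  calc _ ≤ ∑ _i ∈ Finset.range (M.t * (n + 1)), (1 : ℝ) :=
        Finset.sum_le_sum fun _ _ => measureReal_le_one
    _ = M.t * (n + 1) := by simp

theorem indicator_hasScore_succ (n i : ℕ) :
    (M.hasScore (n + 1) M.u i).indicator (1 : Ω → ℝ) =
      (M.hasScore n M.u i).indicator 1
      - (M.stepOne n i ∩ M.hasScore n M.u i).indicator 1
      - (M.stepBig n i ∩ M.hasScore n M.u i).indicator 1
      + (M.born (n + 1) i).indicator 1
      - (M.bornAbove (n + 1) i).indicator 1 := by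
  ext ω
  have hS := M.S_mono n i ω
  have hpop : M.pop n ω ≤ M.pop (n + 1) ω := M.pop_mono ω n.le_succ
  have hu : i < M.pop n ω → M.u ≤ M.S n i ω := M.score_ge_u n i ω
  have hu' : i < M.pop (n + 1) ω → M.u ≤ M.S (n + 1) i ω := M.score_ge_u (n + 1) i ω
  simp only [hasScore, stepOne, stepBig, born, bornAbove, Set.indicator_apply, Pi.one_apply,
    Pi.add_apply, Pi.sub_apply, Set.mem_inter_iff, Set.mem_ofPred_eq, Nat.add_sub_cancel]
  split_ifs <;> first | (exfalso; omega) | norm_num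

theorem measureReal_hasScore_succ (n i : ℕ) :
    M.μ.real (M.hasScore (n + 1) M.u i) =
      M.μ.real (M.hasScore n M.u i)
      - M.μ.real (M.stepOne n i ∩ M.hasScore n M.u i)
      - M.μ.real (M.stepBig n i ∩ M.hasScore n M.u i)
      + M.μ.real (M.born (n + 1) i)
      - M.μ.real (M.bornAbove (n + 1) i) := by
  have hA := M.measurableSet_hasScore n i M.u
  have hOne := (M.measurableSet_stepOne n i).inter hA
  have hBig := (M.measurableSet_stepBig n i).inter hA
  have hBorn := M.measurableSet_born (n + 1) i
  have hAbove := M.measurableSet_bornAbove (n + 1) i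
  have hI : ∀ {s : Set Ω}, MeasurableSet s → Integrable (s.indicator (1 : Ω → ℝ)) M.μ :=
    fun hs => (integrable_const 1).indicator hs
  rw [← integral_indicator_one (M.measurableSet_hasScore (n + 1) i M.u),
    M.indicator_hasScore_succ n i,
    integral_sub' ((((hI hA).sub (hI hOne)).sub (hI hBig)).add (hI hBorn)) (hI hAbove),
    integral_add' (((hI hA).sub (hI hOne)).sub (hI hBig)) (hI hBorn),
    integral_sub' ((hI hA).sub (hI hOne)) (hI hBig), integral_sub' (hI hA) (hI hOne),
    integral_indicator_one hA, integral_indicator_one hOne, integral_indicator_one hBig,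
    integral_indicator_one hBorn, integral_indicator_one hAbove]

theorem EX_succ_eq (n : ℕ) :
    M.EX (n + 1) M.u =
      M.EX n M.u
      - ∑ i ∈ Finset.range (M.t * (n + 2)), M.μ.real (M.stepOne n i ∩ M.hasScore n M.u i)
      - ∑ i ∈ Finset.range (M.t * (n + 2)), M.μ.real (M.stepBig n i ∩ M.hasScore n M.u i)
      + ∑ i ∈ Finset.range (M.t * (n + 2)), M.μ.real (M.born (n + 1) i)
      - ∑ i ∈ Finset.range (M.t * (n + 2)), M.μ.real (M.bornAbove (n + 1) i) := by
  rw [M.EX_eq_sum_measureReal (n := n + 1) (N := M.t * (n + 2)) le_rfl,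
    M.EX_eq_sum_measureReal (N := M.t * (n + 2)) (by gcongr; omega)]
  simp only [M.measureReal_hasScore_succ, Finset.sum_add_distrib, Finset.sum_sub_distrib]

theorem abs_measureReal_stepOne_inter_sub_le {n : ℕ} (hn : 1 ≤ n) (i : ℕ) :
    |M.μ.real (M.stepOne n i ∩ M.hasScore n M.u i)
        - (M.a * M.u + M.b) / n * M.μ.real (M.hasScore n M.u i)|
      ≤ M.c₀ * (M.u / n) ^ 2 * M.μ.real (M.hasScore n M.u i) := by
  refine abs_measureReal_inter_sub_le_of_condExp (M.F_le n) (M.measurableSet_hasScore_F n i M.u)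
    (M.measurableSet_stepOne n i) ?_
  filter_upwards [M.score_up_one n hn i] with ω h ⟨hi, hs⟩
  rw [hs, sub_sub, ← add_div] at h
  exact h hi

theorem measureReal_stepBig_inter_le {n : ℕ} (hn : 1 ≤ n) (i : ℕ) :
    M.μ.real (M.stepBig n i ∩ M.hasScore n M.u i)
      ≤ M.c₀ * (M.u / n) ^ 2 * M.μ.real (M.hasScore n M.u i) := by
  refine measureReal_inter_le_of_condExp_le (M.F_le n) (M.measurableSet_hasScore_F n i M.u)
    (M.measurableSet_stepBig n i) ?_
  filter_upwards [M.score_up_big n hn i] with ω h ⟨hi, hs⟩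
  rw [hs] at h
  exact h hi

theorem sum_indicator_born {n N : ℕ} (hN : M.t * (n + 1) ≤ N) (ω : Ω) :
    ∑ i ∈ Finset.range N, (M.born n i).indicator (1 : Ω → ℝ) ω
      = (M.pop n ω : ℝ) - M.pop (n - 1) ω := by
  have hpop := M.pop_le n ω
  have hmono := M.pop_pred_le n ω
  simp only [born, Set.indicator_apply, Pi.one_apply, Finset.sum_boole, Set.mem_ofPred_eq]
  have hIco : (Finset.range N).filter (fun i => M.pop (n - 1) ω ≤ i ∧ i < M.pop n ω)
      = Finset.Ico (M.pop (n - 1) ω) (M.pop n ω) := by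
    ext i
    simp only [Finset.mem_filter, Finset.mem_range, Finset.mem_Ico]
    omega
  rw [hIco, Nat.card_Ico, Nat.cast_sub hmono]

theorem abs_sum_measureReal_born_sub_le {n N : ℕ} (hn : 1 ≤ n) (hN : M.t * (n + 1) ≤ N) :
    |∑ i ∈ Finset.range N, M.μ.real (M.born n i) - M.m| ≤ M.c₀ / n := by
  have hInt : ∀ i ∈ Finset.range N, Integrable ((M.born n i).indicator (1 : Ω → ℝ)) M.μ :=
    fun i _ => (integrable_const 1).indicator (M.measurableSet_born n i)
  simp only [← integral_indicator_one (M.measurableSet_born n _)]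
  rw [← integral_finsetSum _ hInt]
  simp only [M.sum_indicator_born hN]
  exact M.xi_mean n hn

theorem sum_indicator_bornAbove_le {n N : ℕ} (hn : 1 ≤ n) (hN : M.t * (n + 1) ≤ N) (ω : Ω) :
    ∑ i ∈ Finset.range N, (M.bornAbove n i).indicator (1 : Ω → ℝ) ω
      ≤ M.t * (⋃ i, M.bornAbove n i).indicator 1 ω := by
  by_cases hω : ω ∈ ⋃ i, M.bornAbove n i
  · rw [Set.indicator_of_mem hω, Pi.one_apply, mul_one]
    have hbirths : M.pop n ω - M.pop (n - 1) ω ≤ M.t := by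
      simpa [Nat.sub_add_cancel hn] using M.births_le (n - 1) ω
    calc _ ≤ ∑ i ∈ Finset.range N, (M.born n i).indicator (1 : Ω → ℝ) ω :=
          Finset.sum_le_sum fun i _ => Set.indicator_le_indicator_of_subset
            (s := M.bornAbove n i) (t := M.born n i) (fun _ h => ⟨h.1, h.2.1⟩)
            (fun _ => zero_le_one) ω
      _ = (M.pop n ω : ℝ) - M.pop (n - 1) ω := M.sum_indicator_born hN ω
      _ ≤ M.t := by rw [← Nat.cast_sub (M.pop_pred_le n ω)]; exact_mod_cast hbirths
  · rw [Set.indicator_of_notMem hω, mul_zero]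
    exact (Finset.sum_eq_zero fun i _ =>
      Set.indicator_of_notMem (fun h => hω (Set.mem_iUnion_of_mem i h)) _).le

theorem measureReal_iUnion_bornAbove_le {n : ℕ} (hn : 1 ≤ n) :
    M.μ.real (⋃ i, M.bornAbove n i) ≤ M.c₀ / n := by
  have hset : (⋃ i, M.bornAbove n i) =
      {ω | ∃ i, M.pop (n - 1) ω ≤ i ∧ i < M.pop n ω ∧ M.u < M.S n i ω} := by
    ext ω
    simp [bornAbove]
  rw [hset, measureReal_def]
  exact ENNReal.toReal_le_of_le_ofReal (div_nonneg M.c₀_pos.le n.cast_nonneg) (M.new_score_u n hn)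

theorem sum_measureReal_bornAbove_le {n N : ℕ} (hn : 1 ≤ n) (hN : M.t * (n + 1) ≤ N) :
    ∑ i ∈ Finset.range N, M.μ.real (M.bornAbove n i) ≤ M.t * (M.c₀ / n) := by
  have hE : MeasurableSet (⋃ i, M.bornAbove n i) :=
    MeasurableSet.iUnion (M.measurableSet_bornAbove n)
  have hInt : ∀ i ∈ Finset.range N, Integrable ((M.bornAbove n i).indicator (1 : Ω → ℝ)) M.μ :=
    fun i _ => (integrable_const 1).indicator (M.measurableSet_bornAbove n i)
  simp only [← integral_indicator_one (M.measurableSet_bornAbove n _)]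
  rw [← integral_finsetSum _ hInt]
  calc _ ≤ ∫ ω, (M.t : ℝ) * (⋃ i, M.bornAbove n i).indicator 1 ω ∂M.μ :=
        integral_mono (integrable_finsetSum _ hInt)
          (((integrable_const 1).indicator hE).const_mul _) (M.sum_indicator_bornAbove_le hn hN)
    _ ≤ M.t * (M.c₀ / n) := by
        rw [integral_const_mul, integral_indicator_one hE]
        exact mul_le_mul_of_nonneg_left (M.measureReal_iUnion_bornAbove_le hn) M.t.cast_nonneg

theorem abs_sum_measureReal_stepOne_inter_sub_le {n N : ℕ} (hn : 1 ≤ n) (hN : M.t * (n + 1) ≤ N) :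
    |∑ i ∈ Finset.range N, M.μ.real (M.stepOne n i ∩ M.hasScore n M.u i)
        - (M.a * M.u + M.b) / n * M.EX n M.u| ≤ M.c₀ * (M.u / n) ^ 2 * M.EX n M.u := by
  rw [M.EX_eq_sum_measureReal hN, Finset.mul_sum, Finset.mul_sum, ← Finset.sum_sub_distrib]
  exact (Finset.abs_sum_le_sum_abs _ _).trans
    (Finset.sum_le_sum fun i _ => M.abs_measureReal_stepOne_inter_sub_le hn i)

theorem sum_measureReal_stepBig_inter_le {n N : ℕ} (hn : 1 ≤ n) (hN : M.t * (n + 1) ≤ N) :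
    ∑ i ∈ Finset.range N, M.μ.real (M.stepBig n i ∩ M.hasScore n M.u i)
      ≤ M.c₀ * (M.u / n) ^ 2 * M.EX n M.u := by
  rw [M.EX_eq_sum_measureReal hN, Finset.mul_sum]
  exact Finset.sum_le_sum fun i _ => M.measureReal_stepBig_inter_le hn i

theorem abs_EX_succ_sub_le {n : ℕ} (hn : 1 ≤ n) :
    |M.EX (n + 1) M.u - (1 - (M.a * M.u + M.b) / n) * M.EX n M.u - M.m|
      ≤ 2 * M.c₀ * (M.u / n) ^ 2 * M.EX n M.u + (1 + M.t) * (M.c₀ / (n + 1)) := by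
  have hN : M.t * (n + 1) ≤ M.t * (n + 2) := by gcongr; omega
  have hOne := M.abs_sum_measureReal_stepOne_inter_sub_le hn hN
  have hBig := M.sum_measureReal_stepBig_inter_le hn hN
  have hBig₀ : 0 ≤ ∑ i ∈ Finset.range (M.t * (n + 2)),
      M.μ.real (M.stepBig n i ∩ M.hasScore n M.u i) :=
    Finset.sum_nonneg fun _ _ => measureReal_nonneg
  have hBorn :=
    M.abs_sum_measureReal_born_sub_le (n := n + 1) (N := M.t * (n + 2)) (by omega) le_rfl
  have hAbove :=
    M.sum_measureReal_bornAbove_le (n := n + 1) (N := M.t * (n + 2)) (by omega) le_rfl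
  have hAbove₀ : 0 ≤ ∑ i ∈ Finset.range (M.t * (n + 2)), M.μ.real (M.bornAbove (n + 1) i) :=
    Finset.sum_nonneg fun _ _ => measureReal_nonneg
  push_cast at hBorn hAbove
  rw [M.EX_succ_eq n, abs_le]
  rw [abs_le] at hOne hBorn
  constructor <;> linarith

theorem exists_abs_EX_succ_sub_le : ∃ K : ℝ, ∀ n ≥ 1,
    |M.EX (n + 1) M.u - (1 - (M.a * M.u + M.b) / n) * M.EX n M.u - M.m| ≤ K / n := by
  refine ⟨4 * M.c₀ * M.u ^ 2 * M.t + (1 + M.t) * M.c₀, fun n hn => ?_⟩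
  have hn' : (1 : ℝ) ≤ n := by exact_mod_cast hn
  have hc₀ := M.c₀_pos
  have hEX : M.EX n M.u ≤ 2 * M.t * n := by
    have := M.EX_le n M.u
    nlinarith [(M.t.cast_nonneg : (0 : ℝ) ≤ M.t)]
  calc _ ≤ 2 * M.c₀ * (M.u / n) ^ 2 * M.EX n M.u + (1 + M.t) * (M.c₀ / (n + 1)) :=
        M.abs_EX_succ_sub_le hn
    _ ≤ 2 * M.c₀ * (M.u / n) ^ 2 * (2 * M.t * n) + (1 + M.t) * (M.c₀ / n) := by
        gcongr
        linarith
    _ = (4 * M.c₀ * M.u ^ 2 * M.t + (1 + M.t) * M.c₀) / n := by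
        field_simp
        ring

end ModelS

/-- In Model S with `a > 0`, there is a constant `C₁` such that for all `n`,
`|E X_n(u) − n·m/(a·u + b + 1)| ≤ C₁`, where `u` is the minimal score of a new
individual. -/
theorem expectation_minimal_score {Ω : Type} [MeasurableSpace Ω]
    (M : ModelS Ω) (ha : 0 < M.a) :
    ∃ C₁ : ℝ, ∀ n : ℕ,
      |M.EX n M.u - (n : ℝ) * M.m / (M.a * (M.u : ℝ) + M.b + 1)| ≤ C₁ := by
  obtain ⟨K, hK⟩ := M.exists_abs_EX_succ_sub_le
  have hq : 0 < M.a * M.u + M.b :=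
    add_pos_of_pos_of_nonneg (mul_pos ha (by exact_mod_cast M.u_pos)) M.b_nonneg
  exact exists_abs_sub_le_of_abs_succ_sub_le hq hK
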